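/- arXiv:2309.11708 — 2 statements merged into one kernel-verified Lean document; each statement's English description precedes it below -/
import Mathlib

section
/- Let α, β ∈ ℝ with β < α, let C ∈ ℂ with C ≠ 0, let M ≥ 0, R > 0, b ∈ ℝ, and let r : (R, ∞) × ℝ → ℂ satisfy |r(ρ, θ)| ≤ M ρ^β for all ρ > R and θ ∈ ℝ. Suppose that for all ρ > R and all θ ∈ ℝ: Im(C ρ^α e^{iαθ}) + Im r(ρ, θ) ≤ ρ |sin θ| + b. Then: (i) α ≤ 1; (ii) α ∉ (0, 1); (iii) if α = 1 then C is real with 0 < |C| ≤ 1. (These are the constraints on the leading asymptotic behavior of a dispersion relation obeying the improved causality criterion Im ω ≤ |Im k| + b for large complex k; in particular the conventional asymptotic causality criterion lim_{|k|→∞} |Re ω|/|k| ≤ 1 follows from the improved criterion.) -/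
/-!
Writing `C = ‖C‖ e^{i arg C}`, the criterion reads
`‖C‖ sin (arg C + α θ) ρ^α ≤ |sin θ| ρ + O(ρ^β) + b` for every fixed direction `θ`. Dividing by
`ρ^α` and letting `ρ → ∞` bounds the leading coefficient `‖C‖ sin (arg C + α θ)`: by `0` if
`α > 1` (contradicted at the direction where the sine is `1`), by `0` on the real axis
`θ ∈ πℤ` if `0 < α < 1` (contradicted because `arg C + α π ℤ` meets `(0, π)`), and by `|sin θ|`
if `α = 1`, which at `θ = 0, π, π/2 - arg C` gives `Im C = 0` and `‖C‖ ≤ 1`.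
-/

open Real Filter Asymptotics

lemma isLittleO_rpow_rpow_atTop {β α : ℝ} (hβα : β < α) :
    (fun ρ : ℝ => ρ ^ β) =o[atTop] fun ρ => ρ ^ α := by
  refine (isLittleO_iff_tendsto' ?_).mpr ?_
  · filter_upwards [eventually_gt_atTop 0] with ρ hρ h0
    exact absurd h0 (rpow_pos_of_pos hρ α).ne'
  · refine (tendsto_rpow_neg_atTop (sub_pos.mpr hβα)).congr' ?_
    filter_upwards [eventually_gt_atTop 0] with ρ hρ
    rw [neg_sub, rpow_sub hρ]

lemma isLittleO_mul_rpow_add_const_atTop (M b : ℝ) {β α : ℝ} (hβα : β < α) (hα : 0 < α) :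
    (fun ρ : ℝ => M * ρ ^ β + b) =o[atTop] fun ρ => ρ ^ α :=
  ((isLittleO_rpow_rpow_atTop hβα).const_mul_left M).add <|
    isLittleO_const_left.mpr <| .inr <| tendsto_norm_atTop_atTop.comp (tendsto_rpow_atTop hα)

lemma le_of_eventually_mul_rpow_le {c a γ : ℝ} {g : ℝ → ℝ} (hg : g =o[atTop] fun ρ => ρ ^ γ)
    (h : ∀ᶠ ρ in atTop, c * ρ ^ γ ≤ a * ρ ^ γ + g ρ) : c ≤ a := by
  suffices c - a ≤ 0 by linarith
  refine ge_of_tendsto hg.tendsto_div_nhds_zero ?_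
  filter_upwards [h, eventually_gt_atTop 0] with ρ hρ hρ0
  rw [le_div_iff₀ (rpow_pos_of_pos hρ0 γ)]
  linarith

lemma Complex.im_mul_ofReal_mul_exp_mul_I (C : ℂ) (x t : ℝ) :
    (C * x * exp (t * I)).im = ‖C‖ * x * Real.sin (arg C + t) := by
  conv_lhs => rw [← norm_mul_exp_arg_mul_I C]
  rw [show ‖C‖ * exp (arg C * I) * x * exp (t * I) = ((‖C‖ * x : ℝ) : ℂ) * exp ((arg C + t : ℝ) * I) by
    push_cast; rw [add_mul, exp_add]; ring]
  rw [im_ofReal_mul, exp_ofReal_mul_I_im, mul_assoc]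

/-- The causality bound in polar form, with the remainder `r` absorbed into `M ρ ^ β`. -/
def CausalLeadingBound (C : ℂ) (α β M b : ℝ) : Prop :=
  ∀ θ : ℝ, ∀ᶠ ρ in atTop,
    ‖C‖ * sin (Complex.arg C + α * θ) * ρ ^ α ≤ |sin θ| * ρ + (M * ρ ^ β + b)

lemma causalLeadingBound_of_forall {C : ℂ} {α β M R b : ℝ} {r : ℝ → ℝ → ℂ}
    (hr : ∀ ρ θ : ℝ, R < ρ → ‖r ρ θ‖ ≤ M * ρ ^ β)
    (h : ∀ ρ θ : ℝ, R < ρ →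
      (C * ((ρ ^ α : ℝ) : ℂ) * Complex.exp (Complex.I * α * θ)).im + (r ρ θ).im ≤
        ρ * |Real.sin θ| + b) :
    CausalLeadingBound C α β M b := by
  intro θ
  filter_upwards [eventually_gt_atTop R] with ρ hρ
  have hrem : -(M * ρ ^ β) ≤ (r ρ θ).im :=
    neg_le_of_abs_le <| (Complex.abs_im_le_norm _).trans (hr ρ θ hρ)
  have hlead := h ρ θ hρ
  rw [show Complex.I * α * θ = ((α * θ : ℝ) : ℂ) * Complex.I by push_cast; ring,
    Complex.im_mul_ofReal_mul_exp_mul_I] at hlead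
  linarith

namespace CausalLeadingBound

variable {C : ℂ} {α β M b : ℝ}

lemma coeff_nonpos_of_one_lt (hB : CausalLeadingBound C α β M b) (hβα : β < α) (hα : 1 < α)
    (θ : ℝ) : ‖C‖ * sin (Complex.arg C + α * θ) ≤ 0 := by
  have hρ : (fun ρ : ℝ => |sin θ| * ρ) =o[atTop] fun ρ => ρ ^ α :=
    ((isLittleO_rpow_rpow_atTop hα).const_mul_left _).congr_left fun ρ => by rw [rpow_one]
  refine le_of_eventually_mul_rpow_le
    (hρ.add (isLittleO_mul_rpow_add_const_atTop M b hβα (by linarith))) ?_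
  simpa using hB θ

lemma coeff_nonpos_of_sin_eq_zero (hB : CausalLeadingBound C α β M b) (hβα : β < α) (hα : 0 < α)
    {θ : ℝ} (hθ : sin θ = 0) : ‖C‖ * sin (Complex.arg C + α * θ) ≤ 0 := by
  refine le_of_eventually_mul_rpow_le (isLittleO_mul_rpow_add_const_atTop M b hβα hα) ?_
  simpa [hθ] using hB θ

lemma coeff_le_abs_sin (hB : CausalLeadingBound C 1 β M b) (hβ : β < 1) (θ : ℝ) :
    ‖C‖ * sin (Complex.arg C + θ) ≤ |sin θ| := by
  refine le_of_eventually_mul_rpow_le (isLittleO_mul_rpow_add_const_atTop M b hβ one_pos) ?_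
  simpa using hB θ

lemma le_one (hB : CausalLeadingBound C α β M b) (hC : C ≠ 0) (hβα : β < α) : α ≤ 1 := by
  by_contra! hα
  have hθ : Complex.arg C + α * ((π / 2 - Complex.arg C) / α) = π / 2 := by
    field_simp; ring
  have := hB.coeff_nonpos_of_one_lt hβα hα ((π / 2 - Complex.arg C) / α)
  rw [hθ, sin_pi_div_two, mul_one] at this
  exact hC (norm_le_zero_iff.mp this)

lemma notMem_Ioo (hB : CausalLeadingBound C α β M b) (hC : C ≠ 0) (hβα : β < α) :
    α ∉ Set.Ioo (0 : ℝ) 1 := by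
  rintro ⟨hα0, hα1⟩
  have hs : 0 < α * π := mul_pos hα0 pi_pos
  obtain ⟨k, hk⟩ := (existsUnique_add_zsmul_mem_Ioc hs (Complex.arg C) 0).exists
  have hphase : Complex.arg C + α * (k * π) ∈ Set.Ioo 0 π := by
    rw [zsmul_eq_mul, zero_add] at hk
    constructor <;> nlinarith [hk.1, hk.2, pi_pos]
  have := hB.coeff_nonpos_of_sin_eq_zero hβα hα0 (sin_int_mul_pi k)
  have hsin := sin_pos_of_pos_of_lt_pi hphase.1 hphase.2
  exact hC (norm_le_zero_iff.mp (nonpos_of_mul_nonpos_left this hsin))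

lemma im_eq_zero_and_norm_le_one (hB : CausalLeadingBound C 1 β M b) (hβ : β < 1) :
    C.im = 0 ∧ ‖C‖ ≤ 1 := by
  have him_nonpos := hB.coeff_le_abs_sin hβ 0
  have him_nonneg := hB.coeff_le_abs_sin hβ π
  have hnorm := hB.coeff_le_abs_sin hβ (π / 2 - Complex.arg C)
  rw [add_zero, sin_zero, abs_zero, Complex.norm_mul_sin_arg] at him_nonpos
  rw [sin_add_pi, sin_pi, abs_zero, mul_neg, Complex.norm_mul_sin_arg, neg_nonpos] at him_nonneg
  rw [add_sub_cancel, sin_pi_div_two, mul_one] at hnorm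
  exact ⟨le_antisymm him_nonpos him_nonneg, hnorm.trans (abs_sin_le_one _)⟩

end CausalLeadingBound

theorem causal_leading_asymptotics_general (α β : ℝ) (hβα : β < α)
    (C : ℂ) (hC : C ≠ 0) (M R : ℝ) (b : ℝ)
    (r : ℝ → ℝ → ℂ)
    (hr : ∀ ρ θ : ℝ, R < ρ → ‖r ρ θ‖ ≤ M * ρ ^ β)
    (h : ∀ ρ θ : ℝ, R < ρ →
      (C * ((ρ ^ α : ℝ) : ℂ) * Complex.exp (Complex.I * α * θ)).im + (r ρ θ).im ≤
        ρ * |Real.sin θ| + b) :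
    α ≤ 1 ∧ α ∉ Set.Ioo (0 : ℝ) 1 ∧
      (α = 1 → C.im = 0 ∧ 0 < ‖C‖ ∧ ‖C‖ ≤ 1) := by
  have hB := causalLeadingBound_of_forall hr h
  refine ⟨hB.le_one hC hβα, hB.notMem_Ioo hC hβα, ?_⟩
  rintro rfl
  obtain ⟨him, hnorm⟩ := hB.im_eq_zero_and_norm_le_one hβα
  exact ⟨him, norm_pos_iff.mpr hC, hnorm⟩

/-- Constraints on the leading asymptotic behavior `ω = C k^α + O(|k|^β)`
of a dispersion relation obeying the improved causality criterion `Im ω ≤ |Im k| + b` for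
large complex `k = ρ e^{iθ}`.  If `β < α`, `C ≠ 0`, `|r(ρ,θ)| ≤ M ρ^β` for `ρ > R`, and
`Im(C ρ^α e^{iαθ}) + Im r(ρ,θ) ≤ ρ |sin θ| + b` for all `ρ > R`, `θ ∈ ℝ`, then:
(i) `α ≤ 1`; (ii) `α ∉ (0,1)`; (iii) if `α = 1` then `C` is real with `0 < |C| ≤ 1`. -/
theorem causal_leading_asymptotics (α β : ℝ) (hβα : β < α)
    (C : ℂ) (hC : C ≠ 0) (M R : ℝ) (hM : 0 ≤ M) (hR : 0 < R) (b : ℝ)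
    (r : ℝ → ℝ → ℂ)
    (hr : ∀ ρ θ : ℝ, R < ρ → ‖r ρ θ‖ ≤ M * ρ ^ β)
    (h : ∀ ρ θ : ℝ, R < ρ →
      (C * ((ρ ^ α : ℝ) : ℂ) * Complex.exp (Complex.I * α * θ)).im + (r ρ θ).im ≤
        ρ * |Real.sin θ| + b) :
    α ≤ 1 ∧ α ∉ Set.Ioo (0 : ℝ) 1 ∧
      (α = 1 → C.im = 0 ∧ 0 < ‖C‖ ∧ ‖C‖ ≤ 1) :=
  causal_leading_asymptotics_general α β hβα C hC M R b r hr h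
end

section
/- Let η = diag(1,−1,−1,−1), let u ∈ ℝ⁴ satisfy η_{μν}u^μu^ν = 1, let ψ ∈ ℝ⁴ be a covector, and let E, c², ζ, τ be real constants. Set B = u^μ ψ_μ, Δ^{αμ} = η^{αμ} − u^α u^μ, V^α = Δ^{αμ} ψ_μ, and V² = η_{αβ} V^α V^β. Consider the 6×6 real matrix A with: A₁₁ = B; A₁,(1+ν) = E ψ_ν for ν = 0,…,3; A₁₆ = 0; A_{(1+α),1} = −c² Δ^{αμ}ψ_μ; A_{(1+α),(1+ν)} = E δ^α_ν B; A_{(1+α),6} = −Δ^{αμ}ψ_μ for α, ν = 0,…,3; A₆₁ = 0; A₆,(1+ν) = ζ ψ_ν; A₆₆ = τ B. Then det A = E³ B⁴ { τ E B² + [τ c² E + ζ] V² }. -/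
/-!
Let `V = ηψ - (u·ψ)u` be the part of `ψ` transverse to `u`. Since `η² = 1` and `u` is a unit
vector, `η(V, V) = ψ·V`. After moving the energy and bulk rows to the front, `A` is a block
matrix whose lower right block is the scalar `EB` and whose off-diagonal blocks have rank one.
The Schur complement identity `det [[P, Q], [S, d]] = dⁿ⁻ᵐ det (dP - QS)`, valid in any
commutative ring, reduces `det A` to a 2×2 determinant involving only `B` and `ψ·V`.
-/

open scoped BigOperators

/-- The Minkowski metric `η = diag(1,-1,-1,-1)` on `ℝ⁴`. -/
noncomputable def minkowskiEta : Matrix (Fin 4) (Fin 4) ℝ :=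
  Matrix.diagonal ![1, -1, -1, -1]

open Matrix Polynomial

section

variable {m n R : Type*} [Fintype m] [Fintype n] [CommRing R]

namespace Matrix

section Blocks

variable [DecidableEq m] [DecidableEq n]

theorem pow_card_mul_det_fromBlocks_smul_one₂₂ (d : R) (P : Matrix m m R) (Q : Matrix m n R)
    (S : Matrix n m R) :
    d ^ Fintype.card m * det (fromBlocks P Q S (d • 1)) =
      d ^ Fintype.card n * det (d • P - Q * S) := by
  have hmul : fromBlocks (d • 1) (-Q) 0 1 * fromBlocks P Q S (d • 1) =
      fromBlocks (d • P - Q * S) 0 S (d • 1) := by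
    simp [fromBlocks_multiply, sub_eq_add_neg]
  have hdet := congrArg det hmul
  rw [det_mul, det_fromBlocks_zero₂₁, det_fromBlocks_zero₁₂] at hdet
  simpa [det_smul, mul_comm] using hdet

/-- To cancel `d ^ card m` without assuming `d` regular, take `d = X` in `R[X]` and evaluate. -/
theorem det_fromBlocks_smul_one₂₂ (d : R) (P : Matrix m m R) (Q : Matrix m n R)
    (S : Matrix n m R) (h : Fintype.card m ≤ Fintype.card n) :
    det (fromBlocks P Q S (d • 1)) =
      d ^ (Fintype.card n - Fintype.card m) * det (d • P - Q * S) := by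
  have hX : det (fromBlocks (P.map (C : R →+* R[X])) (Q.map C) (S.map C) ((X : R[X]) • 1)) =
      X ^ (Fintype.card n - Fintype.card m) * det ((X : R[X]) • P.map C - Q.map C * S.map C) := by
    rw [← (isRegular_X_pow (R := R) (Fintype.card m)).left.eq_iff,
      pow_card_mul_det_fromBlocks_smul_one₂₂, ← mul_assoc, ← pow_add, Nat.add_sub_cancel' h]
  have hd := congrArg (evalRingHom d) hX
  rw [map_mul, map_pow, RingHom.map_det, RingHom.map_det, RingHom.mapMatrix_apply,
    RingHom.mapMatrix_apply] at hd
  convert hd using 3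
  · simp [fromBlocks_map, smul_one_eq_diagonal, Function.comp_def]
  · simp
  · ext i j
    simp [mul_apply, eval_finsetSum, mul_comm d]

end Blocks

theorem sum_sum_mul_mul_eq_dotProduct_mulVec (M : Matrix n n R) (x y : n → R) :
    ∑ i, ∑ j, M i j * x i * y j = x ⬝ᵥ M *ᵥ y := by
  simp only [dotProduct, mulVec, Finset.mul_sum]
  exact Finset.sum_congr rfl fun _ _ => Finset.sum_congr rfl fun _ _ => by ring

end Matrix

def transverseProjection (η : Matrix n n R) (u ψ : n → R) : n → R :=
  η *ᵥ ψ - (u ⬝ᵥ ψ) • u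

theorem transverseProjection_apply (η : Matrix n n R) (u ψ : n → R) (a : n) :
    transverseProjection η u ψ a = ∑ μ, (η a μ - u a * u μ) * ψ μ := by
  simp only [transverseProjection, Pi.sub_apply, Pi.smul_apply, smul_eq_mul, mulVec, dotProduct,
    sub_mul, Finset.sum_sub_distrib, Finset.sum_mul]
  exact congrArg _ (Finset.sum_congr rfl fun _ _ => by ring)

theorem transverseProjection_dotProduct_mulVec_self [DecidableEq n] {η : Matrix n n R}
    (hsymm : η.IsSymm) (hsq : η * η = 1) {u : n → R} (hu : u ⬝ᵥ η *ᵥ u = 1)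
    (ψ : n → R) :
    transverseProjection η u ψ ⬝ᵥ η *ᵥ transverseProjection η u ψ =
      ψ ⬝ᵥ transverseProjection η u ψ := by
  have hηη : ∀ x, η *ᵥ (η *ᵥ x) = x := fun x => by rw [mulVec_mulVec, hsq, one_mulVec]
  have hswap : ∀ x y, (η *ᵥ x) ⬝ᵥ y = x ⬝ᵥ η *ᵥ y := fun x y => by
    rw [dotProduct_mulVec, ← mulVec_transpose, hsymm.eq]
  simp only [transverseProjection, mulVec_sub, mulVec_smul, hηη, sub_dotProduct, dotProduct_sub,
    smul_dotProduct, dotProduct_smul, hswap, hu, smul_eq_mul]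
  rw [dotProduct_comm ψ u]
  ring

def bulkCharacteristicBlocks [DecidableEq n] (E B c2 ζ τ : R) (ψ V : n → R) :
    Matrix (Fin 2 ⊕ n) (Fin 2 ⊕ n) R :=
  fromBlocks !![B, 0; 0, τ * B] (vecMulVec ![E, ζ] ψ) (vecMulVec V ![-c2, -1]) ((E * B) • 1)

theorem det_bulkCharacteristicBlocks [DecidableEq n] (E B c2 ζ τ : R) (ψ V : n → R)
    (hn : 2 ≤ Fintype.card n) :
    det (bulkCharacteristicBlocks E B c2 ζ τ ψ V) =
      (E * B) ^ (Fintype.card n - 2) * (E * B ^ 2) *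
        (τ * E * B ^ 2 + (τ * c2 * E + ζ) * (ψ ⬝ᵥ V)) := by
  rw [bulkCharacteristicBlocks, det_fromBlocks_smul_one₂₂ _ _ _ _ (by simpa using hn),
    vecMulVec_mul_vecMulVec, det_fin_two]
  simp only [Fintype.card_fin, Matrix.sub_apply, Matrix.smul_apply, Pi.smul_apply,
    vecMulVec_apply, of_apply, cons_val', cons_val_zero, cons_val_one, cons_val_fin_one,
    smul_eq_mul]
  ring

end

theorem minkowskiEta_isSymm : minkowskiEta.IsSymm := isSymm_diagonal _

theorem minkowskiEta_mul_self : minkowskiEta * minkowskiEta = 1 := by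
  rw [minkowskiEta, diagonal_mul_diagonal, ← diagonal_one]
  congr 1
  ext i
  fin_cases i <;> simp

noncomputable def bulkBlockEquiv : Fin 6 ≃ Fin 2 ⊕ Fin 4 :=
  Equiv.ofBijective ![.inl 0, .inr 0, .inr 1, .inr 2, .inr 3, .inl 1] (by decide)

theorem submatrix_bulkCharacteristicBlocks (E B c2 ζ τ : ℝ) (ψ V : Fin 4 → ℝ) :
    (bulkCharacteristicBlocks E B c2 ζ τ ψ V).submatrix bulkBlockEquiv bulkBlockEquiv =
      Matrix.of ![
        ![B,          E * ψ 0, E * ψ 1, E * ψ 2, E * ψ 3, 0],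
        ![-c2 * V 0,  E * B,   0,       0,       0,       -V 0],
        ![-c2 * V 1,  0,       E * B,   0,       0,       -V 1],
        ![-c2 * V 2,  0,       0,       E * B,   0,       -V 2],
        ![-c2 * V 3,  0,       0,       0,       E * B,   -V 3],
        ![0,          ζ * ψ 0, ζ * ψ 1, ζ * ψ 2, ζ * ψ 3, τ * B]] := by
  ext i j
  simp only [submatrix_apply, bulkBlockEquiv, Equiv.ofBijective_apply, bulkCharacteristicBlocks]
  fin_cases i <;> fin_cases j <;> simp [fromBlocks, one_apply, mul_comm c2]

theorem MIS_bulk_characteristic_determinant_general (u ψ : Fin 4 → ℝ)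
    (hu : ∑ μ, ∑ ν, minkowskiEta μ ν * u μ * u ν = 1)
    (E c2 ζ τ : ℝ)
    (B : ℝ)
    (V : Fin 4 → ℝ) (hV : ∀ a, V a = ∑ μ, (minkowskiEta a μ - u a * u μ) * ψ μ)
    (V2 : ℝ) (hV2 : V2 = ∑ a, ∑ b, minkowskiEta a b * V a * V b)
    (A : Matrix (Fin 6) (Fin 6) ℝ)
    (hA : A = Matrix.of ![
      ![B,          E * ψ 0, E * ψ 1, E * ψ 2, E * ψ 3, 0],
      ![-c2 * V 0,  E * B,   0,       0,       0,       -V 0],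
      ![-c2 * V 1,  0,       E * B,   0,       0,       -V 1],
      ![-c2 * V 2,  0,       0,       E * B,   0,       -V 2],
      ![-c2 * V 3,  0,       0,       0,       E * B,   -V 3],
      ![0,          ζ * ψ 0, ζ * ψ 1, ζ * ψ 2, ζ * ψ 3, τ * B]]) :
    A.det = E ^ 3 * B ^ 4 * (τ * E * B ^ 2 + (τ * c2 * E + ζ) * V2) := by
  have hV_eq : V = transverseProjection minkowskiEta u ψ :=
    funext fun a => (hV a).trans (transverseProjection_apply _ _ _ a).symm
  have hV2_eq : V2 = ψ ⬝ᵥ V := by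
    rw [sum_sum_mul_mul_eq_dotProduct_mulVec] at hu
    rw [hV2, sum_sum_mul_mul_eq_dotProduct_mulVec, hV_eq]
    exact transverseProjection_dotProduct_mulVec_self minkowskiEta_isSymm
      minkowskiEta_mul_self hu ψ
  rw [hA, ← submatrix_bulkCharacteristicBlocks, det_submatrix_equiv_self,
    det_bulkCharacteristicBlocks _ _ _ _ _ _ _ (by simp), hV2_eq, Fintype.card_fin]
  ring

/-- The characteristic determinant of the Müller–Israel–Stewart equations
with bulk viscous pressure only.  With `u` a unit timelike vector, `ψ` a covector,
`B = u^μψ_μ`, `V^α = (η^{αμ} − u^αu^μ)ψ_μ`, `V² = η_{αβ}V^αV^β`, the 6×6 characteristic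
matrix `A` (rows: energy equation, four momentum equations, bulk relaxation equation)
satisfies `det A = E³ B⁴ (τ E B² + (τ c² E + ζ) V²)`. -/
theorem MIS_bulk_characteristic_determinant (u ψ : Fin 4 → ℝ)
    (hu : ∑ μ, ∑ ν, minkowskiEta μ ν * u μ * u ν = 1)
    (E c2 ζ τ : ℝ)
    (B : ℝ) (hB : B = ∑ μ, u μ * ψ μ)
    (V : Fin 4 → ℝ) (hV : ∀ a, V a = ∑ μ, (minkowskiEta a μ - u a * u μ) * ψ μ)
    (V2 : ℝ) (hV2 : V2 = ∑ a, ∑ b, minkowskiEta a b * V a * V b)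
    (A : Matrix (Fin 6) (Fin 6) ℝ)
    (hA : A = Matrix.of ![
      ![B,          E * ψ 0, E * ψ 1, E * ψ 2, E * ψ 3, 0],
      ![-c2 * V 0,  E * B,   0,       0,       0,       -V 0],
      ![-c2 * V 1,  0,       E * B,   0,       0,       -V 1],
      ![-c2 * V 2,  0,       0,       E * B,   0,       -V 2],
      ![-c2 * V 3,  0,       0,       0,       E * B,   -V 3],
      ![0,          ζ * ψ 0, ζ * ψ 1, ζ * ψ 2, ζ * ψ 3, τ * B]]) :
    A.det = E ^ 3 * B ^ 4 * (τ * E * B ^ 2 + (τ * c2 * E + ζ) * V2) :=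
  MIS_bulk_characteristic_determinant_general u ψ hu E c2 ζ τ B V hV V2 hV2 A hA
end
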